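/- Let p ≠ q be points in the plane, let H⁺ and H⁻ be the two open halfplanes bounded by the line through p and q, and let D₁, D₂ be closed discs whose boundary circles both pass through p and q. Then D₁ ∩ H⁺ ⊆ D₂ ∩ H⁺ or D₂ ∩ H⁺ ⊆ D₁ ∩ H⁺; moreover D₁ ∩ H⁺ ⊆ D₂ ∩ H⁺ holds if and only if D₂ ∩ H⁻ ⊆ D₁ ∩ H⁻. -/

import Mathlib

/-!
Write `v = q - p` and let `ω` be the area form of the plane, so that `orient p q x = ω v (x - p)`.
All centres of circles through `p` and `q` lie on the perpendicular bisector, so `c₂ - c₁ ⟂ v`,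
and the Lagrange identity `⟪v, u⟫ ⟪v, w⟫ + ω v u ω v w = ‖v‖² ⟪u, w⟫` turns the difference of the
powers of `x` with respect to the two circles into `-2 ω v (x - p) ω v (c₂ - c₁) / ‖v‖²`. Hence the
cap of `D₁` in `H⁺` lies in `D₂` as soon as `ω v (c₂ - c₁) ≥ 0`; conversely, if `ω v (c₂ - c₁) < 0`,
the point of `∂D₁` furthest in the direction `J v` lies in `H⁺` but outside `D₂`. Both parts of the
theorem follow, `H⁻` being `H⁺` for the opposite orientation.
-/

noncomputable section

/-- Points of the Euclidean plane. -/
abbrev Pt := EuclideanSpace ℝ (Fin 2)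

/-- The orientation (cross product) determinant of the triple `(p, q, r)`; it is
positive on one open halfplane bounded by the line `pq`, negative on the other,
and zero exactly on the line. -/
def orient (p q r : Pt) : ℝ :=
  (q 0 - p 0) * (r 1 - p 1) - (q 1 - p 1) * (r 0 - p 0)

open AffineSubspace EuclideanGeometry Metric Module RealInnerProductSpace

section InnerProductSpace

variable {E : Type*} [NormedAddCommGroup E] [InnerProductSpace ℝ E]

theorem norm_sub_sq_sub_sq_eq_of_dist_eq {p c₁ c₂ : E} {ρ₁ ρ₂ : ℝ} (h₁ : dist p c₁ = ρ₁)
    (h₂ : dist p c₂ = ρ₂) (x : E) :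
    ‖x - c₂‖ ^ 2 - ρ₂ ^ 2 = ‖x - c₁‖ ^ 2 - ρ₁ ^ 2 - 2 * ⟪x - p, c₂ - c₁⟫ := by
  subst h₁ h₂
  rw [dist_eq_norm, dist_eq_norm, ← sub_add_sub_cancel x p c₁, ← sub_add_sub_cancel x p c₂,
    norm_add_sq_real, norm_add_sq_real, ← sub_sub_sub_cancel_left c₁ c₂ p,
    inner_sub_right (x - p) (p - c₁) (p - c₂)]
  ring

end InnerProductSpace

namespace Orientation

variable {E : Type*} [NormedAddCommGroup E] [InnerProductSpace ℝ E] [Fact (finrank ℝ E = 2)]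
  (o : Orientation ℝ E (Fin 2)) {p q c c₁ c₂ : E} {ρ ρ₁ ρ₂ : ℝ}

local notation "ω" => o.areaForm
local notation "J" => o.rightAngleRotation

theorem sq_norm_mul_norm_sub_sq_sub_sq_eq (hp₁ : dist p c₁ = ρ₁) (hq₁ : dist q c₁ = ρ₁)
    (hp₂ : dist p c₂ = ρ₂) (hq₂ : dist q c₂ = ρ₂) (x : E) :
    ‖q - p‖ ^ 2 * (‖x - c₂‖ ^ 2 - ρ₂ ^ 2) =
      ‖q - p‖ ^ 2 * (‖x - c₁‖ ^ 2 - ρ₁ ^ 2) - 2 * (ω (q - p) (x - p) * ω (q - p) (c₂ - c₁)) := by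
  have hperp : ⟪q - p, c₂ - c₁⟫ = 0 := by
    rw [real_inner_comm]
    exact inner_vsub_vsub_of_dist_eq_of_dist_eq (hp₁.trans hq₁.symm) (hp₂.trans hq₂.symm)
  have hlagrange := o.inner_mul_inner_add_areaForm_mul_areaForm (q - p) (x - p) (c₂ - c₁)
  rw [hperp, mul_zero, zero_add] at hlagrange
  rw [norm_sub_sq_sub_sq_eq_of_dist_eq hp₁ hp₂]
  linear_combination 2 * hlagrange

theorem abs_areaForm_sub_lt_of_dist_eq (hpq : p ≠ q) (hp : dist p c = ρ) (hq : dist q c = ρ) :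
    |ω (q - p) (c - p)| < ‖q - p‖ * ρ := by
  have hv : 0 < ‖q - p‖ := norm_pos_iff.mpr (sub_ne_zero.mpr hpq.symm)
  have hbis : ⟪q - p, c - p⟫ = ‖q - p‖ ^ 2 / 2 := by
    have := mem_perpBisector_iff_inner_eq.mp (mem_perpBisector_iff_dist_eq'.mpr (hp.trans hq.symm))
    rwa [vsub_eq_sub, vsub_eq_sub, real_inner_comm, dist_eq_norm'] at this
  have hpyth := o.inner_sq_add_areaForm_sq (q - p) (c - p)
  rw [hbis, ← dist_eq_norm' p c, hp] at hpyth
  apply abs_lt_of_sq_lt_sq _ (by positivity [dist_nonneg.trans_eq hp])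
  nlinarith [pow_pos hv 4]

theorem exists_mem_sphere_areaForm_pos (hpq : p ≠ q) (hp : dist p c = ρ) (hq : dist q c = ρ) :
    ∃ x ∈ sphere c ρ, 0 < ω (q - p) (x - p) := by
  have hv : 0 < ‖q - p‖ := norm_pos_iff.mpr (sub_ne_zero.mpr hpq.symm)
  have hρ : 0 ≤ ρ := dist_nonneg.trans_eq hp
  refine ⟨c + (ρ / ‖q - p‖) • J (q - p), ?_, ?_⟩
  · rw [Metric.mem_sphere, dist_eq_norm, add_sub_cancel_left, norm_smul,
      LinearIsometryEquiv.norm_map, Real.norm_eq_abs, abs_of_nonneg (by positivity),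
      div_mul_cancel₀ _ hv.ne']
  · have hlt := (abs_lt.mp (o.abs_areaForm_sub_lt_of_dist_eq hpq hp hq)).1
    rw [add_sub_right_comm, map_add, map_smul, o.areaForm_rightAngleRotation_right,
      real_inner_self_eq_norm_sq, smul_eq_mul, div_mul_eq_mul_div, pow_two, ← mul_assoc,
      mul_div_cancel_right₀ _ hv.ne']
    linarith

theorem mem_closedBall_of_areaForm_mul_nonneg (hpq : p ≠ q) (hp₁ : dist p c₁ = ρ₁)
    (hq₁ : dist q c₁ = ρ₁) (hp₂ : dist p c₂ = ρ₂) (hq₂ : dist q c₂ = ρ₂) {x : E}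
    (hx : x ∈ closedBall c₁ ρ₁) (h : 0 ≤ ω (q - p) (x - p) * ω (q - p) (c₂ - c₁)) :
    x ∈ closedBall c₂ ρ₂ := by
  have hv : 0 < ‖q - p‖ ^ 2 := by positivity [sub_ne_zero.mpr hpq.symm]
  rw [mem_closedBall, dist_eq_norm] at hx ⊢
  rw [← sq_le_sq₀ (norm_nonneg _) (dist_nonneg.trans_eq hp₂)]
  have hx' : ‖x - c₁‖ ^ 2 ≤ ρ₁ ^ 2 := pow_le_pow_left₀ (norm_nonneg _) hx 2
  nlinarith [o.sq_norm_mul_norm_sub_sq_sub_sq_eq hp₁ hq₁ hp₂ hq₂ x]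

theorem closedBall_inter_subset_closedBall_inter_iff (hpq : p ≠ q) (hp₁ : dist p c₁ = ρ₁)
    (hq₁ : dist q c₁ = ρ₁) (hp₂ : dist p c₂ = ρ₂) (hq₂ : dist q c₂ = ρ₂) :
    closedBall c₁ ρ₁ ∩ {x | 0 < ω (q - p) (x - p)} ⊆
        closedBall c₂ ρ₂ ∩ {x | 0 < ω (q - p) (x - p)} ↔
      0 ≤ ω (q - p) (c₂ - c₁) := by
  refine ⟨fun hsub => ?_, fun h x ⟨hx, hpos⟩ =>
    ⟨o.mem_closedBall_of_areaForm_mul_nonneg hpq hp₁ hq₁ hp₂ hq₂ hx (mul_nonneg hpos.le h), hpos⟩⟩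
  by_contra! hneg
  obtain ⟨x, hx, hpos⟩ := o.exists_mem_sphere_areaForm_pos hpq hp₁ hq₁
  have hx₂ := (hsub ⟨sphere_subset_closedBall hx, hpos⟩).1
  rw [mem_closedBall, dist_eq_norm] at hx₂
  rw [Metric.mem_sphere, dist_eq_norm] at hx
  have hv : 0 < ‖q - p‖ ^ 2 := by positivity [sub_ne_zero.mpr hpq.symm]
  have hpow := o.sq_norm_mul_norm_sub_sq_sub_sq_eq hp₁ hq₁ hp₂ hq₂ x
  rw [hx, sub_self, mul_zero, zero_sub] at hpow
  nlinarith [mul_neg_of_pos_of_neg hpos hneg, pow_le_pow_left₀ (norm_nonneg _) hx₂ 2]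

end Orientation

instance : Fact (finrank ℝ Pt = 2) := ⟨finrank_euclideanSpace_fin⟩

def stdOrientation : Orientation ℝ Pt (Fin 2) :=
  (EuclideanSpace.basisFun (Fin 2) ℝ).toBasis.orientation

theorem orient_eq_areaForm (p q x : Pt) :
    orient p q x = stdOrientation.areaForm (q - p) (x - p) := by
  rw [Orientation.areaForm_to_volumeForm,
    stdOrientation.volumeForm_robust (EuclideanSpace.basisFun (Fin 2) ℝ) rfl, Basis.det_apply,
    Matrix.det_fin_two]
  simp only [orient, Basis.toMatrix_apply, Matrix.cons_val_zero, Matrix.cons_val_one,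
    Matrix.cons_val_fin_one, map_sub, Finsupp.coe_sub, Pi.sub_apply,
    OrthonormalBasis.coe_toBasis_repr_apply, EuclideanSpace.basisFun_repr]
  ring

theorem stmt5 (p q c₁ c₂ : Pt) (ρ₁ ρ₂ : ℝ)
    (hpq : p ≠ q)
    (hp₁ : dist p c₁ = ρ₁) (hq₁ : dist q c₁ = ρ₁)
    (hp₂ : dist p c₂ = ρ₂) (hq₂ : dist q c₂ = ρ₂) :
    (Metric.closedBall c₁ ρ₁ ∩ {x : Pt | 0 < orient p q x} ⊆
        Metric.closedBall c₂ ρ₂ ∩ {x : Pt | 0 < orient p q x} ∨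
      Metric.closedBall c₂ ρ₂ ∩ {x : Pt | 0 < orient p q x} ⊆
        Metric.closedBall c₁ ρ₁ ∩ {x : Pt | 0 < orient p q x}) ∧
    (Metric.closedBall c₁ ρ₁ ∩ {x : Pt | 0 < orient p q x} ⊆
        Metric.closedBall c₂ ρ₂ ∩ {x : Pt | 0 < orient p q x} ↔
      Metric.closedBall c₂ ρ₂ ∩ {x : Pt | orient p q x < 0} ⊆
        Metric.closedBall c₁ ρ₁ ∩ {x : Pt | orient p q x < 0}) := by
  have hupper : {x : Pt | 0 < orient p q x} =
      {x | 0 < stdOrientation.areaForm (q - p) (x - p)} := by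
    simp only [orient_eq_areaForm]
  have hlower : {x : Pt | orient p q x < 0} =
      {x | 0 < (-stdOrientation).areaForm (q - p) (x - p)} := by
    simp only [orient_eq_areaForm, Orientation.areaForm_neg_orientation, LinearMap.neg_apply,
      neg_pos]
  rw [hupper, hlower,
    stdOrientation.closedBall_inter_subset_closedBall_inter_iff hpq hp₁ hq₁ hp₂ hq₂,
    stdOrientation.closedBall_inter_subset_closedBall_inter_iff hpq hp₂ hq₂ hp₁ hq₁,
    (-stdOrientation).closedBall_inter_subset_closedBall_inter_iff hpq hp₂ hq₂ hp₁ hq₁,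
    Orientation.areaForm_neg_orientation, ← neg_sub c₂ c₁]
  simp only [LinearMap.neg_apply, map_neg, neg_neg, neg_nonneg, iff_self, and_true]
  exact le_total 0 _
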